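/- arXiv:1003.5748 — 5 statements merged into one kernel-verified Lean document; each statement's English description precedes it below -/
import Mathlib

section
/- Let f : ℝ → ℂ be continuously differentiable, 2π-periodic, with |f(t)| = 1 for all t, and let a_n = (1/2π)∫₀^{2π} f(t) e^{-int} dt be its Fourier coefficients. Then the winding number of f, namely deg f = (1/2πi)∫₀^{2π} f'(t)/f(t) dt, satisfies deg f = ∑_{n ∈ ℤ} n |a_n|². -/
/-!
Integrating by parts, with the boundary term killed by periodicity, the Fourier coefficients of
`f'` are `i n a_n`. The polarized Parseval identity then gives
`(1/2π) ∫ conj f · f' = ∑ conj(a_n) · i n a_n = i ∑ n |a_n|²`.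
-/

open MeasureTheory Real Complex Filter

/-- Fourier coefficient of a `2π`-periodic function. -/
noncomputable def fourierCoef (f : ℝ → ℂ) (n : ℤ) : ℂ :=
  (1 / (2 * Real.pi)) * ∫ t in (0:ℝ)..(2 * Real.pi),
    f t * Complex.exp (-(n : ℂ) * Complex.I * (t : ℂ))

/-- Winding number (topological degree) of a `C¹` unimodular loop. -/
noncomputable def degC1 (f : ℝ → ℂ) : ℂ :=
  (1 / (2 * Real.pi * Complex.I)) * ∫ t in (0:ℝ)..(2 * Real.pi),
    deriv f t * (starRingEnd ℂ) (f t)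

open AddCircle Set ComplexConjugate
open scoped ENNReal

theorem hasSum_star_fourierCoeff_mul_fourierCoeff {T : ℝ} [hT : Fact (0 < T)]
    (f g : Lp ℂ 2 (@haarAddCircle T hT)) :
    HasSum (fun i => star (fourierCoeff f i) * fourierCoeff g i)
      (∫ t, star (f t) * g t ∂haarAddCircle) := by
  have hcoeff (i : ℤ) : star (fourierCoeff f i) * fourierCoeff g i =
      inner ℂ f (fourierBasis i) * inner ℂ (fourierBasis i) g := by
    rw [← fourierBasis_repr, ← fourierBasis_repr, fourierBasis.repr_apply_apply,
      fourierBasis.repr_apply_apply, RCLike.star_def, inner_conj_symm]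
  have hinner : ∫ t, star (f t) * g t ∂haarAddCircle = inner ℂ f g := by
    simp only [L2.inner_def, RCLike.inner_apply, RCLike.star_def, mul_comm]
  simpa only [hcoeff, hinner] using fourierBasis.hasSum_inner_mul_inner f g

theorem hasSum_star_fourierCoeffOn_mul_fourierCoeffOn {a b : ℝ} {f g : ℝ → ℂ} (hab : a < b)
    (hf : MemLp f 2 (volume.restrict (Ioc a b))) (hg : MemLp g 2 (volume.restrict (Ioc a b))) :
    HasSum (fun i => star (fourierCoeffOn hab f i) * fourierCoeffOn hab g i)
      ((b - a)⁻¹ • ∫ x in a..b, star (f x) * g x) := by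
  have := Fact.mk (sub_pos.2 hab)
  rw [← add_sub_cancel a b] at hf hg
  have hf' := hf.memLp_liftIoc.haarAddCircle
  have hg' := hg.memLp_liftIoc.haarAddCircle
  convert hasSum_star_fourierCoeff_mul_fourierCoeff hf'.toLp hg'.toLp using 1
  · ext i
    simp [fourierCoeff_congr_ae hf'.coeFn_toLp, fourierCoeff_congr_ae hg'.coeFn_toLp,
      fourierCoeff_liftIoc_eq]
  · nth_rw 2 [← add_sub_cancel a b]
    rw [← integral_liftIoc_eq_intervalIntegral, ← integral_haarAddCircle]
    refine integral_congr_ae ?_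
    filter_upwards [hf'.coeFn_toLp, hg'.coeFn_toLp] with x hfx hgx
    rw [hfx, hgx]
    rfl

theorem fourierCoeffOn_derivative_of_eq_endpoints {a b : ℝ} (hab : a < b) {f f' : ℝ → ℂ}
    (hf : ∀ x ∈ uIcc a b, HasDerivAt f (f' x) x) (hf' : IntervalIntegrable f' volume a b)
    (hfab : f a = f b) (n : ℤ) :
    fourierCoeffOn hab f' n = 2 * π * I * n / (b - a) * fourierCoeffOn hab f n := by
  rcases eq_or_ne n 0 with rfl | hn
  · simp [fourierCoeffOn_eq_integral, intervalIntegral.integral_eq_sub_of_hasDerivAt hf hf', hfab]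
  · have hba : (b - a : ℂ) ≠ 0 := sub_ne_zero.2 (ofReal_injective.ne hab.ne')
    rw [fourierCoeffOn_of_hasDerivAt hab hn hf hf', hfab, sub_self, mul_zero, zero_sub]
    field_simp

theorem ContinuousOn.memLp_restrict_Ioc {E : Type*} [NormedAddCommGroup E] {f : ℝ → E}
    {a b : ℝ} (hf : ContinuousOn f (Icc a b)) (p : ℝ≥0∞) :
    MemLp f p (volume.restrict (Ioc a b)) := by
  obtain ⟨C, hC⟩ := isCompact_Icc.exists_bound_of_continuousOn hf
  refine .of_bound ((hf.mono Ioc_subset_Icc_self).aestronglyMeasurable measurableSet_Ioc) C ?_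
  exact (ae_restrict_iff' measurableSet_Ioc).2
    (ae_of_all _ fun x hx ↦ hC x (Ioc_subset_Icc_self hx))

theorem fourierCoef_eq_fourierCoeffOn (g : ℝ → ℂ) (n : ℤ) :
    fourierCoef g n = fourierCoeffOn two_pi_pos g n := by
  rw [fourierCoeffOn_eq_integral, fourierCoef, sub_zero, real_smul]
  push_cast
  congr 1
  refine intervalIntegral.integral_congr fun x _ ↦ ?_
  rw [fourier_coe_apply, smul_eq_mul, mul_comm]
  congr 2
  push_cast
  field_simp

theorem fourierCoef_deriv {f : ℝ → ℂ} (hf : ContDiff ℝ 1 f)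
    (hper : Function.Periodic f (2 * π)) (n : ℤ) :
    fourierCoef (deriv f) n = I * n * fourierCoef f n := by
  have hderiv : ∀ x ∈ uIcc 0 (2 * π), HasDerivAt f (deriv f x) x :=
    fun x _ ↦ (hf.differentiable one_ne_zero x).hasDerivAt
  rw [fourierCoef_eq_fourierCoeffOn, fourierCoef_eq_fourierCoeffOn,
    fourierCoeffOn_derivative_of_eq_endpoints two_pi_pos hderiv
      ((hf.continuous_deriv le_rfl).intervalIntegrable _ _) (by simpa using (hper 0).symm)]
  field_simp
  push_cast
  ring

theorem brezis_degree_formula_general (f : ℝ → ℂ)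
    (hf : ContDiff ℝ 1 f) (hper : Function.Periodic f (2 * Real.pi)) :
    HasSum (fun n : ℤ => (n : ℂ) * (‖fourierCoef f n‖ : ℂ) ^ 2) (degC1 f) := by
  have hparseval := hasSum_star_fourierCoeffOn_mul_fourierCoeffOn two_pi_pos
    (hf.continuous.continuousOn.memLp_restrict_Ioc 2)
    ((hf.continuous_deriv le_rfl).continuousOn.memLp_restrict_Ioc 2)
  simp_rw [← fourierCoef_eq_fourierCoeffOn, fourierCoef_deriv hf hper, sub_zero] at hparseval
  have hterm (n : ℤ) : -I * (star (fourierCoef f n) * (I * n * fourierCoef f n)) =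
      n * (‖fourierCoef f n‖ : ℂ) ^ 2 := by
    rw [Complex.star_def, ← Complex.conj_mul']
    linear_combination -(n * conj (fourierCoef f n) * fourierCoef f n) * I_sq
  have hdeg : -I * ((2 * π)⁻¹ • ∫ x in 0..2 * π, star (f x) * deriv f x) = degC1 f := by
    simp only [degC1, real_smul, Complex.star_def, mul_comm (deriv f _)]
    push_cast
    field_simp
    linear_combination -(∫ x in 0..2 * π, conj (f x) * deriv f x) * I_sq
  simpa only [hterm, hdeg] using hparseval.mul_left (-I)

theorem brezis_degree_formula (f : ℝ → ℂ)
    (hf : ContDiff ℝ 1 f) (hper : Function.Periodic f (2 * Real.pi))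
    (hmod : ∀ t, ‖f t‖ = 1) :
    HasSum (fun n : ℤ => (n : ℂ) * (‖fourierCoef f n‖ : ℂ) ^ 2) (degC1 f) :=
  brezis_degree_formula_general f hf hper
end

section
/- If a series ∑_{m≥1} u_m of complex numbers converges to s in the Cesàro sense (C,k) for some k ≥ 0, then it is Abel summable to s: lim_{r→1⁻} ∑_{m≥1} u_m r^m = s. -/
/-!
The `(C,k)` numerators `S⁽ᵏ⁾ₙ` satisfy `∇S⁽ᵏ⁺¹⁾ = S⁽ᵏ⁾` (Pascal's rule) and `∇S⁽⁰⁾ = u`, where `∇`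
is the backward difference, and `∇` multiplies a generating function by `1 - x`. Hence
`∑ uₘ xᵐ = (1 - x)ᵏ⁺¹ ∑ S⁽ᵏ⁾ₙ xⁿ` as soon as the right-hand series converges. Writing
`S⁽ᵏ⁾ₙ = C(n+k,k) cₙ` with `cₙ → s`, the right-hand side is the average of the `cₙ` against the
weights `(1 - x)ᵏ⁺¹ C(n+k,k) xⁿ`. These are nonnegative, sum to `1` and tend to `0` one by one
as `x → 1⁻`, and such averages of a convergent sequence converge to its limit (Toeplitz).
-/

open Filter Finset Topology

section Difference

variable {R : Type*} [CommRing R]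

/-- The backward difference `∇a`, with the convention `a (-1) = 0`. -/
def backDiff (a : ℕ → R) : ℕ → R
  | 0 => a 0
  | n + 1 => a (n + 1) - a n

/-- The numerator `S⁽ᵏ⁾ₙ` of the `(C,k)` mean of `∑ₘ≥₁ uₘ`. -/
def cesaroSum (u : ℕ → R) (k n : ℕ) : R :=
  ∑ m ∈ Icc 1 n, ((n + k - m).choose k : R) * u m

@[simp]
lemma cesaroSum_zero_right (u : ℕ → R) (k : ℕ) : cesaroSum u k 0 = 0 := by
  simp [cesaroSum]

lemma backDiff_cesaroSum_succ (u : ℕ → R) (k : ℕ) :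
    backDiff (cesaroSum u (k + 1)) = cesaroSum u k := by
  funext n
  cases n with
  | zero => simp [backDiff]
  | succ n =>
    have hlast : cesaroSum u (k + 1) n =
        ∑ m ∈ Icc 1 (n + 1), ((n + k + 1 - m).choose (k + 1) : R) * u m := by
      rw [sum_Icc_succ_top (by omega), show n + k + 1 - (n + 1) = k by omega,
        Nat.choose_succ_self, Nat.cast_zero, zero_mul, add_zero]
      exact sum_congr rfl fun m _ => by rw [show n + (k + 1) - m = n + k + 1 - m by omega]
    change cesaroSum u (k + 1) (n + 1) - cesaroSum u (k + 1) n = cesaroSum u k (n + 1)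
    rw [hlast, cesaroSum, cesaroSum, ← sum_sub_distrib]
    refine sum_congr rfl fun m hm => ?_
    have hmn := (mem_Icc.1 hm).2
    rw [show n + 1 + (k + 1) - m = (n + k + 1 - m) + 1 by omega,
      show n + 1 + k - m = n + k + 1 - m by omega, Nat.choose_succ_succ, Nat.cast_add]
    ring

lemma backDiff_iterate_cesaroSum (u : ℕ → R) (k : ℕ) :
    backDiff^[k] (cesaroSum u k) = cesaroSum u 0 := by
  induction k with
  | zero => rfl
  | succ k ih => rw [Function.iterate_succ_apply, backDiff_cesaroSum_succ, ih]

lemma backDiff_cesaroSum_zero_succ (u : ℕ → R) (n : ℕ) :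
    backDiff (cesaroSum u 0) (n + 1) = u (n + 1) := by
  simp [backDiff, cesaroSum, sum_Icc_succ_top]

variable [TopologicalSpace R] [IsTopologicalRing R]

lemma HasSum.backDiff_mul_pow {a : ℕ → R} {x A : R} (h : HasSum (fun n => a n * x ^ n) A) :
    HasSum (fun n => backDiff a n * x ^ n) ((1 - x) * A) := by
  have htail := ((hasSum_nat_add_iff' 1).2 h).sub (h.mul_left x)
  rw [← hasSum_nat_add_iff' 1]
  convert htail using 1
  · funext n
    simp only [backDiff]
    ring
  · simp [backDiff]
    ring

lemma HasSum.backDiff_iterate_mul_pow {a : ℕ → R} {x A : R} (h : HasSum (fun n => a n * x ^ n) A)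
    (j : ℕ) : HasSum (fun n => backDiff^[j] a n * x ^ n) ((1 - x) ^ j * A) := by
  induction j with
  | zero => simpa using h
  | succ j ih =>
    simpa only [Function.iterate_succ_apply', pow_succ', mul_assoc] using ih.backDiff_mul_pow

lemma HasSum.mul_pow_of_cesaroSum {u : ℕ → R} {k : ℕ} {x A : R}
    (h : HasSum (fun n => cesaroSum u k n * x ^ n) A) :
    HasSum (fun m => u (m + 1) * x ^ (m + 1)) ((1 - x) ^ (k + 1) * A) := by
  have := h.backDiff_iterate_mul_pow (k + 1)
  rw [Function.iterate_succ_apply', backDiff_iterate_cesaroSum, ← hasSum_nat_add_iff' 1] at this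
  simp only [backDiff_cesaroSum_zero_succ] at this
  simpa [backDiff] using this

end Difference

section Toeplitz

variable {E : Type*} [NormedAddCommGroup E] [NormedSpace ℝ E]

lemma Summable.smul_of_tendsto [CompleteSpace E] {a : ℕ → ℝ} {c : ℕ → E} {s : E}
    (ha : Summable a) (hc : Tendsto c atTop (𝓝 s)) : Summable fun n => a n • c n := by
  obtain ⟨M, hM⟩ := isBounded_iff_forall_norm_le.1 (Metric.isBounded_range_of_tendsto c hc)
  refine Summable.of_norm_bounded (ha.abs.mul_right M) fun n => ?_
  rw [norm_smul, Real.norm_eq_abs]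
  exact mul_le_mul_of_nonneg_left (hM _ ⟨n, rfl⟩) (abs_nonneg _)

lemma norm_tsum_smul_le {a : ℕ → ℝ} {d : ℕ → E} {M δ : ℝ} {N : ℕ} (ha_nonneg : ∀ n, 0 ≤ a n)
    (ha : HasSum a 1) (hM : ∀ n, ‖d n‖ ≤ M) (hδ : 0 ≤ δ) (hN : ∀ n ≥ N, ‖d n‖ ≤ δ) :
    ‖∑' n, a n • d n‖ ≤ M * ∑ n ∈ range N, a n + δ := by
  have hhead : HasSum (fun n => if n ∈ range N then M * a n else 0) (M * ∑ n ∈ range N, a n) := by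
    convert hasSum_sum_of_ne_finset_zero (L := SummationFilter.unconditional ℕ) (s := range N)
      fun n hn => if_neg hn using 1
    rw [mul_sum]
    exact sum_congr rfl fun n hn => (if_pos hn).symm
  refine tsum_of_norm_bounded (hhead.add (mul_one δ ▸ ha.mul_left δ)) fun n => ?_
  rw [norm_smul, Real.norm_of_nonneg (ha_nonneg n)]
  split_ifs with hn
  · nlinarith [ha_nonneg n, hM n]
  · have := hN n (by simpa using hn)
    nlinarith [ha_nonneg n]

variable [CompleteSpace E]

theorem tendsto_tsum_smul_of_tendsto {α : Type*} {l : Filter α} {a : α → ℕ → ℝ} {c : ℕ → E}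
    {s : E} (ha_nonneg : ∀ᶠ x in l, ∀ n, 0 ≤ a x n) (ha : ∀ᶠ x in l, HasSum (a x) 1)
    (ha_zero : ∀ n, Tendsto (fun x => a x n) l (𝓝 0)) (hc : Tendsto c atTop (𝓝 s)) :
    Tendsto (fun x => ∑' n, a x n • c n) l (𝓝 s) := by
  have hcs : Tendsto (fun n => c n - s) atTop (𝓝 0) := by simpa using hc.sub_const s
  obtain ⟨M, hM⟩ := isBounded_iff_forall_norm_le.1 (Metric.isBounded_range_of_tendsto _ hcs)
  rw [Metric.tendsto_nhds]
  intro ε hε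
  obtain ⟨N, hN⟩ := Metric.tendsto_atTop.1 hcs (ε / 2) (half_pos hε)
  have hhead : Tendsto (fun x => M * ∑ n ∈ range N, a x n) l (𝓝 0) := by
    simpa using (tendsto_finsetSum _ fun n _ => ha_zero n).const_mul M
  filter_upwards [ha_nonneg, ha, hhead.eventually_lt_const (half_pos hε)]
    with x hx_nonneg hx hx_head
  have hshift : ∑' n, a x n • c n - s = ∑' n, a x n • (c n - s) := by
    simp only [smul_sub]
    rw [(hx.summable.smul_of_tendsto hc).tsum_sub (hx.summable.smul_const s),
      hx.summable.tsum_smul_const, hx.tsum_eq, one_smul]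
  rw [dist_eq_norm, hshift]
  calc ‖∑' n, a x n • (c n - s)‖
      ≤ M * ∑ n ∈ range N, a x n + ε / 2 :=
        norm_tsum_smul_le hx_nonneg hx (fun n => hM _ ⟨n, rfl⟩) (half_pos hε).le
          fun n hn => by simpa [dist_eq_norm] using (hN n hn).le
    _ < ε := by linarith

end Toeplitz

theorem tendsto_tsum_one_sub_pow_mul_choose_mul_pow_smul {E : Type*} [NormedAddCommGroup E]
    [NormedSpace ℝ E] [CompleteSpace E] {c : ℕ → E} {s : E} (k : ℕ)
    (hc : Tendsto c atTop (𝓝 s)) :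
    Tendsto (fun r : ℝ => ∑' n, ((1 - r) ^ (k + 1) * ((n + k).choose k * r ^ n)) • c n)
      (𝓝[<] 1) (𝓝 s) := by
  have hr : ∀ᶠ r : ℝ in 𝓝[<] 1, r ∈ Set.Ioo 0 1 := Ioo_mem_nhdsLT zero_lt_one
  refine tendsto_tsum_smul_of_tendsto ?_ ?_ (fun n => ?_) hc
  · filter_upwards [hr] with r hr n
    have hr0 := hr.1.le
    have hr1 := sub_nonneg.2 hr.2.le
    positivity
  · filter_upwards [hr] with r hr
    have hsub : (1 - r) ^ (k + 1) ≠ 0 := pow_ne_zero _ (sub_ne_zero.2 hr.2.ne')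
    have hnorm : ‖r‖ < 1 := by rw [Real.norm_of_nonneg hr.1.le]; exact hr.2
    simpa [hsub] using
      (hasSum_choose_mul_geometric_of_norm_lt_one k hnorm).mul_left ((1 - r) ^ (k + 1))
  · have hcont : Continuous fun r : ℝ => (1 - r) ^ (k + 1) * ((n + k).choose k * r ^ n) := by
      fun_prop
    exact (hcont.tendsto' 1 0 (by simp)).mono_left nhdsWithin_le_nhds

/-- Cesàro `(C,k)` summability implies Abel summability. -/
theorem cesaro_implies_abel (u : ℕ → ℂ) (s : ℂ) (k : ℕ)
    (hC : Tendsto (fun n : ℕ =>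
        (((n + k).choose k : ℂ))⁻¹ *
          ∑ m ∈ Finset.Icc 1 n, (((n + k - m).choose k : ℂ)) * u m)
      atTop (nhds s)) :
    (∀ r : ℝ, r ∈ Set.Ioo (0:ℝ) 1 →
        Summable (fun m : ℕ => u (m + 1) * (r : ℂ) ^ (m + 1))) ∧
      Tendsto (fun r : ℝ => ∑' m : ℕ, u (m + 1) * (r : ℂ) ^ (m + 1))
        (nhdsWithin 1 (Set.Iio 1)) (nhds s) := by
  set c : ℕ → ℂ := fun n => ((n + k).choose k : ℂ)⁻¹ * cesaroSum u k n
  have hc : Tendsto c atTop (𝓝 s) := hC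
  have hS (n : ℕ) : cesaroSum u k n = (n + k).choose k * c n := by
    have : ((n + k).choose k : ℂ) ≠ 0 := Nat.cast_ne_zero.2 (Nat.choose_pos (by omega)).ne'
    simp [c, mul_inv_cancel_left₀ this]
  have habel (r : ℝ) (hr : r ∈ Set.Ioo 0 1) : HasSum (fun m => u (m + 1) * (r : ℂ) ^ (m + 1))
      (∑' n, ((1 - r) ^ (k + 1) * ((n + k).choose k * r ^ n)) • c n) := by
    have hnorm : ‖r‖ < 1 := by rw [Real.norm_of_nonneg hr.1.le]; exact hr.2
    have hsum : Summable fun n => cesaroSum u k n * (r : ℂ) ^ n := by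
      refine ((summable_choose_mul_geometric_of_norm_lt_one k hnorm).smul_of_tendsto hc).congr
        fun n => ?_
      simp only [hS, Complex.real_smul]
      push_cast
      ring
    have hval : (1 - (r : ℂ)) ^ (k + 1) * ∑' n, cesaroSum u k n * (r : ℂ) ^ n =
        ∑' n, ((1 - r) ^ (k + 1) * ((n + k).choose k * r ^ n)) • c n := by
      rw [← tsum_mul_left]
      refine tsum_congr fun n => ?_
      simp only [hS, Complex.real_smul]
      push_cast
      ring
    exact hval ▸ hsum.hasSum.mul_pow_of_cesaroSum
  refine ⟨fun r hr => (habel r hr).summable, ?_⟩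
  refine (tendsto_tsum_one_sub_pow_mul_choose_mul_pow_smul k hc).congr' ?_
  filter_upwards [Ioo_mem_nhdsLT zero_lt_one] with r hr using (habel r hr).tsum_eq.symm
end

section
/- There exists a sequence (u_m)_{m≥1} of real numbers with ∑_{m≥1} |u_m|/m < ∞ such that ∑ u_m converges (to some s) but the Riemann (R,1) means ∑_{m≥1} u_m (sin mt)/(mt) do not tend to s as t → 0⁺. -/
/-!
Put the nonzero terms `coeff k` of the series at sparse positions `position k ≈ (k + 1/2) π N`,
where the scale `N = scale n` is constant on the block `2^2^n ≤ k < 2^2^(n+1)`, and take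
`coeff k = tail k - tail (k + 1)` with `tail k = (-1)^k / (n + 1)` on block `n`. The partial sums
of the series are `tail 0 - tail K → tail 0`.

At `t = 1 / scale n` the terms of block `n` are `coeff k * sin (position k * t) / (position k * t)
≈ |coeff k| / ((k + 1/2) π)`: all positive, adding up to about `2^n log 2 / (n + 1) → ∞`. On
earlier blocks `position k * t` is so small that `sin x / x ≈ 1` and the terms telescope to
`tail 0 - tail (2^2^n) = O(1)`; on later blocks `position k * t ≥ (k + 1)^2`, so they contribute
`O(1)` as well. Hence the `(R,1)` means are unbounded.
-/

open Filter Finset Real Function Topology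

lemma abs_sin_div_self_le_inv {x : ℝ} (hx : 0 < x) : |sin x / x| ≤ x⁻¹ := by
  rw [abs_div, abs_of_pos hx, div_eq_mul_inv]
  exact mul_le_of_le_one_left (inv_pos.mpr hx).le (abs_sin_le_one x)

lemma abs_sin_div_self_sub_one_le {x : ℝ} (hx : 0 < x) : |sin x / x - 1| ≤ x ^ 2 / 6 := by
  have h₁ := sin_le hx.le
  have h₂ := sin_gt_sub_cube hx
  rw [abs_le, div_sub_one hx.ne', le_div_iff₀ hx, div_le_iff₀ hx]
  constructor <;> nlinarith

lemma sin_nat_add_half_mul_pi_add (k : ℕ) (e : ℝ) :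
    sin (((k : ℝ) + 1 / 2) * π + e) = (-1) ^ k * cos e := by
  rw [← sin_add_pi_div_two, ← sin_add_nat_mul_pi]
  ring_nf

theorem Function.Injective.extend_zero_comp {α β γ δ : Type*} [Zero γ] [Zero δ] {f : α → β}
    (hf : Injective f) (c : α → γ) {F : γ → β → δ} (hF : ∀ b, F 0 b = 0) :
    (fun b => F (extend f c 0 b) b) = extend f (fun a => F (c a) (f a)) 0 := by
  funext b
  by_cases hb : ∃ a, f a = b
  · obtain ⟨a, rfl⟩ := hb
    simp only [hf.extend_apply]
  · simp only [extend_apply' _ _ _ hb, Pi.zero_apply, hF]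

section SparseSeries

variable {p : ℕ → ℕ}

theorem StrictMono.exists_le_iff_lt (hp : StrictMono p) (N : ℕ) : ∃ K, ∀ k, p k ≤ N ↔ k < K := by
  have hex : ∃ k, N < p k := ⟨N + 1, Nat.lt_of_lt_of_le N.lt_succ_self (hp.id_le _)⟩
  refine ⟨Nat.find hex, fun k => ⟨fun hk => ?_, fun hk => ?_⟩⟩
  · by_contra! hK
    exact (Nat.find_spec hex).not_ge (hk.trans' (hp.monotone hK))
  · exact not_lt.mp (Nat.find_min hex hk)

theorem sum_Icc_extend_eq {M : Type*} [AddCommMonoid M] (hp : Injective p) (hp0 : ∀ k, p k ≠ 0)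
    (c : ℕ → M) {N K : ℕ} (hK : ∀ k, p k ≤ N ↔ k < K) :
    ∑ m ∈ Icc 1 N, extend p c 0 m = ∑ k ∈ range K, c k := by
  have hsub : (range K).image p ⊆ Icc 1 N := by
    intro m hm
    obtain ⟨k, hk, rfl⟩ := mem_image.mp hm
    exact mem_Icc.mpr ⟨Nat.one_le_iff_ne_zero.mpr (hp0 k), (hK k).mpr (mem_range.mp hk)⟩
  rw [← sum_subset hsub, sum_image hp.injOn]
  · exact sum_congr rfl fun k _ => hp.extend_apply c 0 k
  · intro m hm hm'
    refine extend_apply' _ _ _ ?_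
    rintro ⟨k, rfl⟩
    exact hm' (mem_image_of_mem p (mem_range.mpr ((hK k).mp (mem_Icc.mp hm).2)))

theorem tendsto_sum_Icc_extend {M : Type*} [AddCommMonoid M] [TopologicalSpace M]
    (hp : StrictMono p) (hp0 : ∀ k, p k ≠ 0) {c : ℕ → M} {s : M}
    (hc : Tendsto (fun K => ∑ k ∈ range K, c k) atTop (𝓝 s)) :
    Tendsto (fun N => ∑ m ∈ Icc 1 N, extend p c 0 m) atTop (𝓝 s) := by
  choose K hK using hp.exists_le_iff_lt
  have hKtop : Tendsto K atTop atTop :=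
    tendsto_atTop_atTop.mpr fun k => ⟨p k, fun N hN => ((hK N k).mp hN).le⟩
  simp only [sum_Icc_extend_eq hp.injective hp0 c (hK _)]
  exact hc.comp hKtop

end SparseSeries

namespace RiemannCounterexample

def blockStart (n : ℕ) : ℕ := 2 ^ 2 ^ n

def blockIndex (k : ℕ) : ℕ := Nat.log 2 (Nat.log 2 k)

def scale (n : ℕ) : ℕ := blockStart (n + 3)

lemma blockStart_succ (n : ℕ) : blockStart (n + 1) = blockStart n ^ 2 := by
  rw [blockStart, blockStart, pow_succ, pow_mul]

lemma two_le_blockStart (n : ℕ) : 2 ≤ blockStart n :=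
  Nat.le_self_pow (pow_ne_zero n two_ne_zero) 2

lemma blockStart_strictMono : StrictMono blockStart :=
  (pow_right_strictMono₀ one_lt_two).comp (pow_right_strictMono₀ one_lt_two)

lemma blockIndex_mono : Monotone blockIndex :=
  fun _ _ h => Nat.log_mono_right (Nat.log_mono_right h)

lemma le_blockIndex {n k : ℕ} (h : blockStart n ≤ k) : n ≤ blockIndex k :=
  Nat.le_log_of_pow_le one_lt_two (Nat.le_log_of_pow_le one_lt_two h)

lemma blockIndex_lt {n k : ℕ} (hn : n ≠ 0) (h : k < blockStart n) : blockIndex k < n := by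
  by_contra! hle
  have hlog : Nat.log 2 k ≠ 0 := by
    intro h0
    simp only [blockIndex, h0, Nat.log_zero_right] at hle
    omega
  have hk : k ≠ 0 := by
    rintro rfl
    simp at hlog
  exact h.not_ge (Nat.pow_le_of_le_log hk (Nat.pow_le_of_le_log hlog hle))

lemma lt_blockStart_blockIndex_succ (k : ℕ) : k < blockStart (blockIndex k + 1) :=
  (Nat.lt_pow_succ_log_self one_lt_two k).trans_le
    (Nat.pow_le_pow_right two_pos (Nat.lt_pow_succ_log_self one_lt_two _))

lemma blockIndex_eq {n k : ℕ} (h₁ : blockStart n ≤ k) (h₂ : k < blockStart (n + 1)) :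
    blockIndex k = n :=
  le_antisymm (Nat.lt_succ_iff.mp (blockIndex_lt n.succ_ne_zero h₂)) (le_blockIndex h₁)

lemma tendsto_blockIndex : Tendsto blockIndex atTop atTop :=
  tendsto_atTop_atTop.mpr fun n => ⟨blockStart n, fun _ => le_blockIndex⟩

lemma succ_le_scale_blockIndex (k : ℕ) : k + 1 ≤ scale (blockIndex k) :=
  (lt_blockStart_blockIndex_succ k).trans_le (blockStart_strictMono.monotone (by omega))

lemma scale_blockIndex_of_lt {n k : ℕ} (hn : n ≠ 0) (hk : k < blockStart n) :
    4 * blockStart n ^ 2 * scale (blockIndex k) ≤ scale n := by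
  have hS : scale (blockIndex k) ≤ blockStart (n + 2) :=
    blockStart_strictMono.monotone (by have := blockIndex_lt hn hk; omega)
  have h4 : 4 ≤ blockStart (n + 1) := by
    rw [blockStart_succ]; nlinarith [two_le_blockStart n]
  calc 4 * blockStart n ^ 2 * scale (blockIndex k)
      ≤ (blockStart (n + 1) * blockStart (n + 1)) * blockStart (n + 2) := by
        rw [← blockStart_succ]; gcongr
    _ = scale n := by rw [scale, blockStart_succ (n + 2), blockStart_succ (n + 1)]; ring

lemma scale_blockIndex_of_ge {n k : ℕ} (hk : blockStart (n + 1) ≤ k) :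
    (k + 1) * scale n ≤ scale (blockIndex k) := by
  set m := blockIndex k
  have hnm : n + 1 ≤ m := le_blockIndex hk
  calc (k + 1) * scale n ≤ blockStart (m + 2) * blockStart (m + 2) := by
        gcongr
        · exact (lt_blockStart_blockIndex_succ k).trans_le
            (blockStart_strictMono.monotone (by omega))
        · exact blockStart_strictMono.monotone (by omega)
    _ = scale m := by rw [scale, blockStart_succ (m + 2)]; ring

lemma one_le_scale (n : ℕ) : (1 : ℝ) ≤ scale n := by
  exact_mod_cast (two_le_blockStart _).trans' one_le_two

lemma scale_pos (n : ℕ) : (0 : ℝ) < scale n := (one_le_scale n).trans_lt' one_pos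

lemma scale_blockIndex_mono : Monotone fun k => scale (blockIndex k) :=
  fun _ _ h => blockStart_strictMono.monotone (by have := blockIndex_mono h; omega)

noncomputable def position (k : ℕ) : ℕ := ⌈((k : ℝ) + 1 / 2) * π * scale (blockIndex k)⌉₊

lemma le_position (k : ℕ) : ((k : ℝ) + 1 / 2) * π * scale (blockIndex k) ≤ position k :=
  Nat.le_ceil _

lemma position_lt (k : ℕ) :
    (position k : ℝ) < ((k : ℝ) + 1 / 2) * π * scale (blockIndex k) + 1 :=
  Nat.ceil_lt_add_one (by positivity)

lemma position_strictMono : StrictMono position := by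
  refine strictMono_nat_of_lt_succ fun k => ?_
  have hS : (scale (blockIndex k) : ℝ) ≤ scale (blockIndex (k + 1)) := by
    exact_mod_cast scale_blockIndex_mono k.le_succ
  have h₁ : ((k : ℝ) + 1 / 2) * π * scale (blockIndex k)
      ≤ ((k : ℝ) + 1 / 2) * π * scale (blockIndex (k + 1)) := by gcongr
  have h₂ : 1 < π * scale (blockIndex (k + 1)) := by
    nlinarith [pi_gt_three, one_le_scale (blockIndex (k + 1))]
  have h₃ := le_position (k + 1)
  push_cast at h₃
  exact_mod_cast (by linarith [position_lt k] : (position k : ℝ) < position (k + 1))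

lemma succ_mul_scale_le_position (k : ℕ) :
    ((k : ℝ) + 1) * scale (blockIndex k) ≤ position k := by
  refine le_trans ?_ (le_position k)
  gcongr
  nlinarith [pi_gt_three]

lemma position_le (k : ℕ) : (position k : ℝ) ≤ 4 * ((k : ℝ) + 1) * scale (blockIndex k) := by
  have h : ((k : ℝ) + 1 / 2) * π * scale (blockIndex k)
      ≤ ((k : ℝ) + 1 / 2) * 4 * scale (blockIndex k) := by gcongr; exact pi_lt_four.le
  linarith [position_lt k, one_le_scale (blockIndex k)]

lemma position_pos (k : ℕ) : 0 < position k := by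
  have := succ_mul_scale_le_position k
  have := one_le_scale (blockIndex k)
  exact_mod_cast (by nlinarith : (0 : ℝ) < position k)

noncomputable def tail (k : ℕ) : ℝ := (-1) ^ k / (blockIndex k + 1)

noncomputable def coeff (k : ℕ) : ℝ := tail k - tail (k + 1)

lemma abs_tail_le (k : ℕ) : |tail k| ≤ 1 / (blockIndex k + 1) := by
  rw [tail, abs_div, abs_pow, abs_neg, abs_one, one_pow, abs_of_pos (by positivity)]

lemma abs_tail_le_one (k : ℕ) : |tail k| ≤ 1 :=
  (abs_tail_le k).trans (div_le_one_of_le₀ (by simp) (by positivity))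

lemma tendsto_tail : Tendsto tail atTop (𝓝 0) := by
  refine squeeze_zero_norm abs_tail_le ?_
  exact (tendsto_one_div_add_atTop_nhds_zero_nat (𝕜 := ℝ)).comp tendsto_blockIndex

lemma abs_coeff_le_two (k : ℕ) : |coeff k| ≤ 2 :=
  (abs_sub _ _).trans (by linarith [abs_tail_le_one k, abs_tail_le_one (k + 1)])

lemma sum_range_coeff (K : ℕ) : ∑ k ∈ range K, coeff k = tail 0 - tail K :=
  sum_range_sub' tail K

lemma one_div_succ_le_neg_one_pow_mul_coeff {n k : ℕ} (h₁ : blockStart n ≤ k)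
    (h₂ : k < blockStart (n + 1)) :
    1 / ((n : ℝ) + 1) ≤ (-1) ^ k * coeff k := by
  have : (-1) ^ k * coeff k = 1 / (blockIndex k + 1) + 1 / (blockIndex (k + 1) + 1) := by
    rw [coeff, tail, tail, pow_succ]
    field_simp
    rw [← pow_mul, pow_mul', neg_one_sq, one_pow]
    ring
  rw [this, blockIndex_eq h₁ h₂]
  simp only [le_add_iff_nonneg_right]
  positivity

lemma sq_succ_le_position (k : ℕ) : ((k : ℝ) + 1) ^ 2 ≤ position k := by
  have hS : (k : ℝ) + 1 ≤ scale (blockIndex k) := by exact_mod_cast succ_le_scale_blockIndex k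
  calc ((k : ℝ) + 1) ^ 2 ≤ ((k : ℝ) + 1) * scale (blockIndex k) := by rw [sq]; gcongr
    _ ≤ position k := succ_mul_scale_le_position k

lemma abs_coeff_div_le {k : ℕ} {r y : ℝ} (hr : 0 < r) (hy : r ≤ y) : |coeff k| / y ≤ 2 / r :=
  div_le_div₀ zero_le_two (abs_coeff_le_two k) hr hy

lemma summable_inv_succ_sq : Summable fun k : ℕ => 2 / ((k : ℝ) + 1) ^ 2 := by
  have := ((summable_nat_add_iff 1).mpr (summable_one_div_nat_pow.mpr one_lt_two)).mul_left 2
  refine this.congr fun k => ?_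
  rw [Nat.cast_add_one, mul_one_div]

noncomputable def term (t : ℝ) (k : ℕ) : ℝ := coeff k * sin (position k * t) / (position k * t)

lemma abs_term_le {t : ℝ} (ht : 0 < t) (k : ℕ) : |term t k| ≤ |coeff k| / (position k * t) := by
  have hx : 0 < (position k : ℝ) * t := by have := position_pos k; positivity
  rw [term, mul_div_assoc, abs_mul, div_eq_mul_inv |coeff k|]
  gcongr
  exact abs_sin_div_self_le_inv hx

lemma summable_term {t : ℝ} (ht : 0 < t) : Summable (term t) := by
  refine Summable.of_norm_bounded (summable_inv_succ_sq.div_const t) fun k => ?_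
  calc ‖term t k‖ ≤ |coeff k| / (position k * t) := abs_term_le ht k
    _ = |coeff k| / position k / t := by rw [div_div]
    _ ≤ 2 / ((k : ℝ) + 1) ^ 2 / t := by
        gcongr ?_ / t
        exact abs_coeff_div_le (by positivity) (sq_succ_le_position k)

lemma position_mul_inv_scale_le {n k : ℕ} (hn : n ≠ 0) (hk : k < blockStart n) :
    (position k : ℝ) * (scale n : ℝ)⁻¹ ≤ (blockStart n : ℝ)⁻¹ := by
  have hN : (0 : ℝ) < scale n := scale_pos n
  have hA : (0 : ℝ) < blockStart n := by exact_mod_cast (two_le_blockStart n).trans' one_le_two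
  have hk' : (k : ℝ) + 1 ≤ blockStart n := by exact_mod_cast hk
  have hS : (4 * blockStart n ^ 2 * scale (blockIndex k) : ℝ) ≤ scale n := by
    exact_mod_cast scale_blockIndex_of_lt hn hk
  rw [mul_inv_le_iff₀ hN]
  calc (position k : ℝ) ≤ 4 * ((k : ℝ) + 1) * scale (blockIndex k) := position_le k
    _ ≤ 4 * blockStart n * scale (blockIndex k) := by gcongr
    _ = (blockStart n : ℝ)⁻¹ * (4 * blockStart n ^ 2 * scale (blockIndex k)) := by field_simp
    _ ≤ (blockStart n : ℝ)⁻¹ * scale n := by gcongr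

lemma abs_term_sub_coeff_le {n k : ℕ} (hn : n ≠ 0) (hk : k < blockStart n) :
    |term (scale n : ℝ)⁻¹ k - coeff k| ≤ (blockStart n : ℝ)⁻¹ := by
  set x := (position k : ℝ) * (scale n : ℝ)⁻¹
  have hx : 0 < x := by have := position_pos k; have := scale_pos n; positivity
  have hxA : x ≤ (blockStart n : ℝ)⁻¹ := position_mul_inv_scale_le hn hk
  have hA : (blockStart n : ℝ)⁻¹ ≤ 1 :=
    inv_le_one_of_one_le₀ (by exact_mod_cast (two_le_blockStart n).trans' one_le_two)
  calc |term (scale n : ℝ)⁻¹ k - coeff k| = |coeff k| * |sin x / x - 1| := by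
        rw [← abs_mul, mul_sub, mul_one, term, mul_div_assoc]
    _ ≤ 2 * (x ^ 2 / 6) := by
        gcongr
        · exact abs_coeff_le_two k
        · exact abs_sin_div_self_sub_one_le hx
    _ ≤ (blockStart n : ℝ)⁻¹ := by nlinarith

lemma abs_sum_term_sub_sum_coeff_le {n : ℕ} (hn : n ≠ 0) :
    |∑ k ∈ range (blockStart n), term (scale n : ℝ)⁻¹ k - ∑ k ∈ range (blockStart n), coeff k|
      ≤ 1 := by
  have hA : (blockStart n : ℝ) ≠ 0 := by have := two_le_blockStart n; positivity
  rw [← sum_sub_distrib]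
  calc _ ≤ ∑ k ∈ range (blockStart n), |term (scale n : ℝ)⁻¹ k - coeff k| :=
        abs_sum_le_sum_abs _ _
    _ ≤ ∑ k ∈ range (blockStart n), (blockStart n : ℝ)⁻¹ :=
        sum_le_sum fun k hk => abs_term_sub_coeff_le hn (mem_range.mp hk)
    _ = 1 := by rw [sum_const, card_range, nsmul_eq_mul, mul_inv_cancel₀ hA]

lemma inv_mul_le_term {n k : ℕ} (h₁ : blockStart n ≤ k) (h₂ : k < blockStart (n + 1)) :
    (8 * ((n : ℝ) + 1))⁻¹ * ((k : ℝ) + 1)⁻¹ ≤ term (scale n : ℝ)⁻¹ k := by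
  have hS : scale (blockIndex k) = scale n := by rw [blockIndex_eq h₁ h₂]
  have hN := one_le_scale n
  have hN0 := scale_pos n
  set x := (position k : ℝ) * (scale n : ℝ)⁻¹
  set e := x - ((k : ℝ) + 1 / 2) * π
  have hlow := le_position k
  have hupp := position_lt k
  have hle := position_le k
  rw [hS] at hlow hupp hle
  have he₀ : 0 ≤ e := by
    rw [sub_nonneg, le_mul_inv_iff₀ hN0]
    exact hlow
  have he₁ : e ≤ 1 := by
    rw [sub_le_iff_le_add', mul_inv_le_iff₀ hN0]
    nlinarith
  have hx : x ≤ 4 * ((k : ℝ) + 1) := by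
    rw [mul_inv_le_iff₀ hN0]
    exact hle
  have hcos : 1 / 2 ≤ cos e := by nlinarith [one_sub_sq_div_two_le_cos (x := e)]
  have hsin : sin x = (-1) ^ k * cos e := by
    rw [← sin_nat_add_half_mul_pi_add]; congr 1; ring
  have hx0 : 0 < x := by have := position_pos k; positivity
  calc (8 * ((n : ℝ) + 1))⁻¹ * ((k : ℝ) + 1)⁻¹
        = (1 / ((n : ℝ) + 1) * (1 / 2)) / (4 * ((k : ℝ) + 1)) := by
        field_simp; ring
    _ ≤ ((-1) ^ k * coeff k * cos e) / x := by
        have hc := one_div_succ_le_neg_one_pow_mul_coeff h₁ h₂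
        have hc₀ : 0 ≤ (-1) ^ k * coeff k := (by positivity : (0 : ℝ) ≤ 1 / ((n : ℝ) + 1)).trans hc
        gcongr
    _ = term (scale n : ℝ)⁻¹ k := by
        rw [term, hsin]
        ring

lemma abs_term_add_le (n k : ℕ) :
    |term (scale n : ℝ)⁻¹ (k + blockStart (n + 1))| ≤ 2 / ((k : ℝ) + 1) ^ 2 := by
  set j := k + blockStart (n + 1)
  have hN : (0 : ℝ) < scale n := scale_pos n
  have hS : ((j : ℝ) + 1) * scale n ≤ scale (blockIndex j) := by
    exact_mod_cast scale_blockIndex_of_ge (Nat.le_add_left _ k)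
  have hkj : (k : ℝ) + 1 ≤ j + 1 := by simp [j]
  refine (abs_term_le (inv_pos.mpr hN) j).trans (abs_coeff_div_le (by positivity) ?_)
  calc ((k : ℝ) + 1) ^ 2 ≤ ((j : ℝ) + 1) * (((j : ℝ) + 1) * scale n) * (scale n : ℝ)⁻¹ := by
        rw [mul_assoc, mul_inv_cancel_right₀ hN.ne']; nlinarith
    _ ≤ ((j : ℝ) + 1) * scale (blockIndex j) * (scale n : ℝ)⁻¹ := by gcongr
    _ ≤ position j * (scale n : ℝ)⁻¹ := by gcongr; exact succ_mul_scale_le_position j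

lemma sum_Ico_inv_succ_ge {a b : ℕ} (ha : a ≠ 0) (hab : a ≤ b) :
    log b - log a - 1 ≤ ∑ k ∈ Ico a b, ((k : ℝ) + 1)⁻¹ := by
  have hsum (n : ℕ) : ∑ k ∈ range n, ((k : ℝ) + 1)⁻¹ = harmonic n := by
    simp [harmonic]
  have hb : log b ≤ harmonic b := by
    have hb₀ : (0 : ℝ) < b := by exact_mod_cast (Nat.pos_of_ne_zero ha).trans_le hab
    have := log_add_one_le_harmonic b
    push_cast at this
    exact (log_le_log hb₀ (by linarith)).trans this
  have := harmonic_le_one_add_log a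
  rw [sum_Ico_eq_sub _ hab, hsum, hsum]
  linarith

lemma succ_sq_le_four_mul_two_pow (n : ℕ) : (n + 1) ^ 2 ≤ 4 * 2 ^ n := by
  induction n with
  | zero => norm_num
  | succ n ih =>
    have := Nat.lt_two_pow_self (n := n)
    have h2 : 2 ^ (n + 1) = 2 * 2 ^ n := by ring
    nlinarith

lemma sum_term_block_ge (n : ℕ) :
    ((n : ℝ) + 1) / 64 - 1
      ≤ ∑ k ∈ Ico (blockStart n) (blockStart (n + 1)), term (scale n : ℝ)⁻¹ k := by
  have hA : blockStart n ≠ 0 := by have := two_le_blockStart n; omega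
  have hlog : log (blockStart (n + 1)) - log (blockStart n) = 2 ^ n * log 2 := by
    rw [blockStart_succ, Nat.cast_pow, log_pow, blockStart, Nat.cast_pow, log_pow]
    push_cast
    ring
  have hpow : ((n : ℝ) + 1) ^ 2 ≤ 4 * 2 ^ n := by exact_mod_cast succ_sq_le_four_mul_two_pow n
  have hlog2 := log_two_gt_d9
  calc ((n : ℝ) + 1) / 64 - 1 ≤ (8 * ((n : ℝ) + 1))⁻¹ * (2 ^ n * log 2 - 1) := by
        rw [← div_eq_inv_mul, le_div_iff₀ (by positivity)]
        nlinarith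
    _ ≤ (8 * ((n : ℝ) + 1))⁻¹ * ∑ k ∈ Ico (blockStart n) (blockStart (n + 1)), ((k : ℝ) + 1)⁻¹ := by
        gcongr
        rw [← hlog]
        exact sum_Ico_inv_succ_ge hA (blockStart_strictMono.monotone n.le_succ)
    _ ≤ _ := by
        rw [mul_sum]
        exact sum_le_sum fun k hk => inv_mul_le_term (mem_Ico.mp hk).1 (mem_Ico.mp hk).2

lemma tsum_term_ge {n : ℕ} (hn : n ≠ 0) :
    ((n : ℝ) + 1) / 64 - 4 - ∑' k : ℕ, 2 / ((k : ℝ) + 1) ^ 2 ≤ ∑' k, term (scale n : ℝ)⁻¹ k := by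
  set t := (scale n : ℝ)⁻¹
  have ht : 0 < t := inv_pos.mpr (scale_pos n)
  have hsplit := (summable_term ht).sum_add_tsum_nat_add (blockStart (n + 1))
  rw [← sum_range_add_sum_Ico _ (blockStart_strictMono.monotone n.le_succ)] at hsplit
  have hlow : -3 ≤ ∑ k ∈ range (blockStart n), term t k := by
    have h := abs_sum_term_sub_sum_coeff_le hn
    rw [sum_range_coeff] at h
    linarith [abs_le.mp h, abs_le.mp (abs_tail_le_one 0),
      abs_le.mp (abs_tail_le_one (blockStart n))]
  have hhigh : -∑' k : ℕ, 2 / ((k : ℝ) + 1) ^ 2 ≤ ∑' k, term t (k + blockStart (n + 1)) :=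
    neg_le_of_abs_le (tsum_of_norm_bounded (f := fun k => term t (k + blockStart (n + 1)))
      summable_inv_succ_sq.hasSum (abs_term_add_le n))
  linarith [sum_term_block_ge n]

lemma tendsto_tsum_term : Tendsto (fun n => ∑' k, term (scale n : ℝ)⁻¹ k) atTop atTop := by
  refine tendsto_atTop_mono' _ (eventually_ne_atTop 0 |>.mono fun n hn => tsum_term_ge hn) ?_
  refine tendsto_atTop_add_const_right _ _ (tendsto_atTop_add_const_right _ _ ?_)
  exact (tendsto_atTop_add_const_right _ _ tendsto_natCast_atTop_atTop).atTop_div_const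
    (by norm_num)

noncomputable def seq : ℕ → ℝ := extend position coeff 0

lemma summable_abs_seq_div : Summable fun m : ℕ => |seq (m + 1)| / (m + 1) := by
  have hu : (fun m : ℕ => |seq m| / m) = extend position (fun k => |coeff k| / position k) 0 :=
    position_strictMono.injective.extend_zero_comp coeff (F := fun x m => |x| / m) (by simp)
  have : Summable fun m : ℕ => |seq m| / m := by
    rw [hu, summable_extend_zero position_strictMono.injective]
    exact summable_inv_succ_sq.of_nonneg_of_le (fun k => by positivity)
      fun k => abs_coeff_div_le (by positivity) (sq_succ_le_position k)
  exact_mod_cast (summable_nat_add_iff 1).mpr this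

lemma tendsto_sum_Icc_seq : Tendsto (fun n => ∑ m ∈ Icc 1 n, seq m) atTop (𝓝 (tail 0)) := by
  refine tendsto_sum_Icc_extend position_strictMono (fun k => (position_pos k).ne') ?_
  simp only [sum_range_coeff]
  simpa using tendsto_tail.const_sub (tail 0)

lemma tsum_seq_mul_sin_div (t : ℝ) :
    ∑' m : ℕ, seq (m + 1) * sin ((m + 1) * t) / ((m + 1) * t) = ∑' k, term t k := by
  set G : ℕ → ℝ := fun m => seq m * sin (m * t) / (m * t)
  have hG : G = extend position (term t) 0 :=
    position_strictMono.injective.extend_zero_comp coeff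
      (F := fun x m => x * sin (m * t) / (m * t)) (by simp)
  have hsupp : Function.support G ⊆ Set.range Nat.succ := by
    rintro (_ | m) hm
    · simp [G] at hm
    · exact ⟨m, rfl⟩
  calc ∑' m : ℕ, seq (m + 1) * sin ((m + 1) * t) / ((m + 1) * t) = ∑' m, G (Nat.succ m) := by
        simp [G]
    _ = ∑' k, term t k := by
        rw [Nat.succ_injective.tsum_eq hsupp, hG, tsum_extend_zero position_strictMono.injective]

lemma tendsto_inv_scale : Tendsto (fun n => (scale n : ℝ)⁻¹) atTop (𝓝[>] 0) :=
  tendsto_inv_atTop_nhdsGT_zero.comp <| tendsto_natCast_atTop_atTop.comp <|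
    (blockStart_strictMono.comp (strictMono_id.add_const 3)).tendsto_atTop

end RiemannCounterexample

open RiemannCounterexample

/-- Ordinary convergence does not imply Riemann `(R,1)` summability. -/
theorem convergence_not_implies_R1 :
    ∃ (u : ℕ → ℝ) (s : ℝ),
      Summable (fun m : ℕ => |u (m + 1)| / (m + 1)) ∧
      Tendsto (fun n : ℕ => ∑ m ∈ Finset.Icc 1 n, u m) atTop (nhds s) ∧
      ¬ Tendsto
        (fun t : ℝ => ∑' m : ℕ, u (m + 1) * Real.sin ((m + 1) * t) / ((m + 1) * t))
        (nhdsWithin 0 (Set.Ioi 0)) (nhds s) := by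
  refine ⟨seq, tail 0, summable_abs_seq_div, tendsto_sum_Icc_seq, fun h => ?_⟩
  refine not_tendsto_nhds_of_tendsto_atTop tendsto_tsum_term (tail 0) ?_
  simpa only [Function.comp_def, tsum_seq_mul_sin_div] using h.comp tendsto_inv_scale
end

section
/- There exists a sequence (u_m)_{m≥1} of real numbers with ∑ |u_m|/m < ∞ that is (R,1)-summable, i.e. lim_{t→0⁺} ∑_{m≥1} u_m (sin mt)/(mt) exists, but whose partial sums ∑_{m≤n} u_m do not converge. -/
open Filter Finset Real

open Function Topology

/-! For a summable `e`, put `u n = n * (e (n - 1) - e (n + 1))`. Since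
`sin ((m + 1) t) - sin ((m - 1) t) = 2 sin t cos (m t)`, summation by parts turns the Riemann
mean of `u` into `sinc t * (2 ∑ e m cos (m t) - e 0)`, which is continuous at `0` by the
Weierstrass M-test; and `∑ |u n| / n ≤ 2 ∑ |e m|`. Taking for `e` isolated spikes
`e N = 1 / (N + 1)` at `N = 4 * 2 ^ k` gives `u (N + 1) = 1` infinitely often, so the partial
sums of `u` do not converge. -/

noncomputable def riemannMean (u : ℕ → ℝ) (t : ℝ) : ℝ :=
  ∑' m : ℕ, u (m + 1) * Real.sin ((m + 1) * t) / ((m + 1) * t)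

noncomputable def natMulCentralDiff (e : ℕ → ℝ) (n : ℕ) : ℝ :=
  n * (e (n - 1) - e (n + 1))

lemma norm_mul_le_abs_of_abs_le_one {a b : ℝ} (hb : |b| ≤ 1) : ‖a * b‖ ≤ |a| := by
  rw [Real.norm_eq_abs, abs_mul]
  exact mul_le_of_le_one_right (abs_nonneg a) hb

lemma Summable.mul_of_abs_le_one {e f : ℕ → ℝ} (he : Summable e) (hf : ∀ m, |f m| ≤ 1) :
    Summable fun m => e m * f m :=
  he.abs.of_norm_bounded fun m => norm_mul_le_abs_of_abs_le_one (hf m)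

lemma sin_add_one_mul_sub_sin_sub_one_mul (x t : ℝ) :
    sin ((x + 1) * t) - sin ((x - 1) * t) = 2 * sin t * cos (x * t) := by
  rw [add_mul, sub_mul, one_mul, sin_add, sin_sub]
  ring

lemma tsum_sub_shift_two_mul_sin {e : ℕ → ℝ} (he : Summable e) (t : ℝ) :
    ∑' m : ℕ, (e m - e (m + 2)) * sin ((m + 1) * t) =
      sin t * (2 * ∑' m : ℕ, e m * cos (m * t) - e 0) := by
  have hsin (c : ℝ) : Summable fun m : ℕ => e m * sin ((m + c) * t) :=
    he.mul_of_abs_le_one fun _ => abs_sin_le_one _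
  -- reindexing `m + 2 ↦ m` adds the terms `m = 0, 1`, which are `-e 0 * sin t` and `0`
  have hshift : ∑' m : ℕ, e (m + 2) * sin ((m + 1) * t) =
      ∑' m : ℕ, e m * sin ((m + -1) * t) + e 0 * sin t := by
    rw [← (hsin (-1)).sum_add_tsum_nat_add 2]
    simp only [Finset.sum_range_succ, Finset.sum_range_zero, Nat.cast_add, Nat.cast_ofNat,
      Nat.cast_zero, Nat.cast_one]
    have (m : ℕ) : ((m : ℝ) + 2 + -1) * t = (m + 1) * t := by ring
    simp only [this, zero_add, neg_mul, one_mul, sin_neg, add_neg_cancel, zero_mul, sin_zero,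
      mul_zero]
    ring
  calc ∑' m : ℕ, (e m - e (m + 2)) * sin ((m + 1) * t)
      = ∑' m : ℕ, e m * sin ((m + 1) * t) - ∑' m : ℕ, e (m + 2) * sin ((m + 1) * t) := by
        simp only [sub_mul]
        exact (hsin 1).tsum_sub ((summable_nat_add_iff 2).mpr he |>.mul_of_abs_le_one
          fun _ => abs_sin_le_one _)
    _ = ∑' m : ℕ, (e m * sin ((m + 1) * t) - e m * sin ((m + -1) * t)) - e 0 * sin t := by
        rw [hshift, (hsin 1).tsum_sub (hsin (-1))]
        ring
    _ = sin t * (2 * ∑' m : ℕ, e m * cos (m * t) - e 0) := by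
        simp only [← mul_sub, ← sub_eq_add_neg, sin_add_one_mul_sub_sin_sub_one_mul]
        rw [mul_sub, mul_comm (sin t) (e 0), ← tsum_mul_left, ← tsum_mul_left]
        congr 2
        ext m
        ring

lemma riemannMean_natMulCentralDiff {e : ℕ → ℝ} (he : Summable e) {t : ℝ} (ht : t ≠ 0) :
    riemannMean (natMulCentralDiff e) t =
      sinc t * (2 * ∑' m : ℕ, e m * cos (m * t) - e 0) := by
  have hterm (m : ℕ) : natMulCentralDiff e (m + 1) * sin ((m + 1) * t) / ((m + 1) * t) =
      (e m - e (m + 2)) * sin ((m + 1) * t) / t := by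
    simp only [natMulCentralDiff, Nat.add_sub_cancel, Nat.cast_add, Nat.cast_one]
    field_simp
  rw [riemannMean, tsum_congr hterm, tsum_div_const, tsum_sub_shift_two_mul_sin he,
    sinc_of_ne_zero ht]
  ring

lemma continuous_tsum_mul_cos {e : ℕ → ℝ} (he : Summable e) :
    Continuous fun t => ∑' m : ℕ, e m * cos (m * t) :=
  continuous_tsum (fun m => by fun_prop) he.abs fun _ _ =>
    norm_mul_le_abs_of_abs_le_one (abs_cos_le_one _)

theorem tendsto_riemannMean_natMulCentralDiff {e : ℕ → ℝ} (he : Summable e) :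
    Tendsto (riemannMean (natMulCentralDiff e)) (𝓝[>] 0) (𝓝 (2 * ∑' m : ℕ, e m - e 0)) := by
  have hcont : Continuous fun t => sinc t * (2 * ∑' m : ℕ, e m * cos (m * t) - e 0) := by
    have := continuous_tsum_mul_cos he
    fun_prop
  have h0 := (hcont.tendsto 0).mono_left (nhdsWithin_le_nhds (s := Set.Ioi 0))
  simp only [sinc_zero, mul_zero, cos_zero, mul_one, one_mul] at h0
  refine h0.congr' ?_
  filter_upwards [self_mem_nhdsWithin] with t ht
  exact (riemannMean_natMulCentralDiff he (ne_of_gt ht)).symm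

lemma summable_abs_natMulCentralDiff_div {e : ℕ → ℝ} (he : Summable e) :
    Summable fun m : ℕ => |natMulCentralDiff e (m + 1)| / (m + 1) := by
  refine (he.sub ((summable_nat_add_iff 2).mpr he)).abs.congr fun m => ?_
  have hm : (0 : ℝ) < m + 1 := by positivity
  simp only [natMulCentralDiff, Nat.add_sub_cancel, Nat.cast_add, Nat.cast_one, abs_mul,
    abs_of_pos hm]
  field_simp

lemma tendsto_zero_of_tendsto_sum_Icc {u : ℕ → ℝ} {L : ℝ}
    (hL : Tendsto (fun n => ∑ m ∈ Icc 1 n, u m) atTop (𝓝 L)) : Tendsto u atTop (𝓝 0) := by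
  rw [← tendsto_add_atTop_iff_nat 1, ← sub_self L]
  refine ((tendsto_add_atTop_iff_nat 1).mpr hL).sub hL |>.congr fun n => ?_
  rw [sum_Icc_succ_top (by omega)]
  ring

def spikeNode (k : ℕ) : ℕ := 4 * 2 ^ k

noncomputable def spikes : ℕ → ℝ :=
  extend spikeNode (fun k => ((spikeNode k : ℝ) + 1)⁻¹) 0

lemma spikeNode_strictMono : StrictMono spikeNode := fun a b h => by
  unfold spikeNode
  have := Nat.pow_lt_pow_right (by norm_num : 1 < 2) h
  omega

lemma summable_spikes : Summable spikes := by
  rw [spikes, summable_extend_zero spikeNode_strictMono.injective]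
  refine summable_geometric_two.of_nonneg_of_le (fun k => by positivity) fun k => ?_
  rw [one_div, inv_pow]
  gcongr
  push_cast [spikeNode]
  linarith [pow_pos (two_pos : (0 : ℝ) < 2) k]

lemma natMulCentralDiff_spikes_node_succ (k : ℕ) :
    natMulCentralDiff spikes (spikeNode k + 1) = 1 := by
  have hgap : ¬∃ j, spikeNode j = spikeNode k + 2 := by
    rintro ⟨j, hj⟩
    unfold spikeNode at hj
    omega
  rw [natMulCentralDiff, Nat.add_sub_cancel, spikes, spikeNode_strictMono.injective.extend_apply,
    extend_apply' _ _ _ hgap, Pi.zero_apply, sub_zero, Nat.cast_add, Nat.cast_one,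
    mul_inv_cancel₀ (by positivity)]

/-- Riemann `(R,1)` summability does not imply ordinary convergence. -/
theorem R1_not_implies_convergence :
    ∃ (u : ℕ → ℝ) (s : ℝ),
      Summable (fun m : ℕ => |u (m + 1)| / (m + 1)) ∧
      Tendsto
        (fun t : ℝ => ∑' m : ℕ, u (m + 1) * Real.sin ((m + 1) * t) / ((m + 1) * t))
        (nhdsWithin 0 (Set.Ioi 0)) (nhds s) ∧
      ¬ ∃ L : ℝ, Tendsto (fun n : ℕ => ∑ m ∈ Finset.Icc 1 n, u m) atTop (nhds L) := by
  refine ⟨natMulCentralDiff spikes, _, summable_abs_natMulCentralDiff_div summable_spikes,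
    tendsto_riemannMean_natMulCentralDiff summable_spikes, ?_⟩
  rintro ⟨L, hL⟩
  have hnodes : Tendsto (fun k => spikeNode k + 1) atTop atTop :=
    (tendsto_add_atTop_nat 1).comp spikeNode_strictMono.tendsto_atTop
  have h := (tendsto_zero_of_tendsto_sum_Icc hL).comp hnodes
  simp only [comp_def, natMulCentralDiff_spikes_node_succ] at h
  exact one_ne_zero (tendsto_nhds_unique tendsto_const_nhds h)
end

section
/- Let f : ℝ → ℂ be 2π-periodic, continuous, |f| ≡ 1, satisfying the integrated smoothness condition ∫₀^{2π} |f(s+t) − f(s)|³ ds = o(t) as t → 0⁺ (i.e. f ∈ λ^3_{1/3}). Then lim_{t→0⁺} ∑_{n∈ℤ} |a_n|² (sin nt)/t = deg f. -/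
open MeasureTheory Real Complex Filter Asymptotics

/-!
Parseval's identity applied to `f` and its translate `f (· + t)` gives
`∑ |aₙ|² e^{int} = (2π)⁻¹ ∫₀^{2π} conj (f s) f (s + t) ds`; taking imaginary parts, the symmetric
partial sums of `∑ |aₙ|² sin (nt) / t` converge to `(2π t)⁻¹ ∫₀^{2π} sin (φ (s + t) - φ s) ds`.
Replacing `sin x` by `x` costs `|x|³ / 6 ≤ (π³ / 48) |e^{ix} - 1|³` once `|x| ≤ π`, which holds for
`x = φ (s + t) - φ s` uniformly in `s` when `t` is small; so by the `λ³` condition the error is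
`o(t)`, while
`t⁻¹ ∫₀^{2π} (φ (s + t) - φ s) ds = t⁻¹ (∫_{2π}^{2π+t} φ - ∫₀^t φ) → φ (2π) - φ 0`.
-/

open ComplexConjugate Topology AddCircle

section FourierAddCircle
variable {T : ℝ}

theorem fourier_sub_apply (n : ℤ) (x a : AddCircle T) :
    fourier n (x - a) = conj (fourier n a) * fourier n x := by
  simp [sub_eq_add_neg, toCircle_add, mul_comm]

variable [Fact (0 < T)]

theorem hasSum_conj_fourierCoeff_mul_fourierCoeff (f g : Lp ℂ 2 (@haarAddCircle T _)) :
    HasSum (fun n => conj (fourierCoeff f n) * fourierCoeff g n)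
      (∫ x, conj (f x) * g x ∂haarAddCircle) := by
  have hcoeff (h : Lp ℂ 2 (@haarAddCircle T _)) (n : ℤ) :
      inner ℂ h (fourierBasis n) = conj (fourierCoeff h n) := by
    rw [← inner_conj_symm, ← fourierBasis.repr_apply_apply, fourierBasis_repr]
  have h := fourierBasis.hasSum_inner_mul_inner f g
  simp only [hcoeff, ← fourierBasis.repr_apply_apply, fourierBasis_repr] at h
  simpa only [L2.inner_def, RCLike.inner_apply'] using h

theorem hasSum_conj_fourierCoeff_mul_fourierCoeff_of_continuous (f g : C(AddCircle T, ℂ)) :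
    HasSum (fun n => conj (fourierCoeff f n) * fourierCoeff g n)
      (∫ x, conj (f x) * g x ∂haarAddCircle) := by
  convert hasSum_conj_fourierCoeff_mul_fourierCoeff (f.toLp 2 haarAddCircle ℂ)
    (g.toLp 2 haarAddCircle ℂ) using 1
  · simp only [fourierCoeff_toLp]
  · refine integral_congr_ae ?_
    filter_upwards [f.coeFn_toLp (p := 2) (𝕜 := ℂ) haarAddCircle,
      g.coeFn_toLp (p := 2) (𝕜 := ℂ) haarAddCircle] with x hf hg
    rw [hf, hg]

theorem fourierCoeff_comp_add_right {E : Type*} [NormedAddCommGroup E] [NormedSpace ℂ E]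
    (f : AddCircle T → E) (a : AddCircle T) (n : ℤ) :
    fourierCoeff (fun x => f (x + a)) n = fourier n a • fourierCoeff f n := by
  simp only [fourierCoeff]
  rw [← integral_smul, ← integral_sub_right_eq_self _ a]
  congr 1 with x
  rw [sub_add_cancel, smul_smul, fourier_sub_apply, fourier_neg, conj_conj]

theorem hasSum_sq_norm_fourierCoeff_mul_fourier (f : C(AddCircle T, ℂ)) (a : AddCircle T) :
    HasSum (fun n => (‖fourierCoeff f n‖ ^ 2 : ℂ) * fourier n a)
      (∫ x, conj (f x) * f (x + a) ∂haarAddCircle) := by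
  have h := hasSum_conj_fourierCoeff_mul_fourierCoeff_of_continuous f
    (f.comp (ContinuousMap.addRight a))
  simpa only [ContinuousMap.coe_comp, ContinuousMap.coe_addRight, Function.comp_def,
    fourierCoeff_comp_add_right, smul_eq_mul, mul_comm (fourier _ a), ← mul_assoc,
    conj_mul'] using h

end FourierAddCircle

instance fact_zero_lt_two_pi : Fact (0 < 2 * π) := ⟨two_pi_pos⟩

theorem fourier_coe_two_pi (n : ℤ) (x : ℝ) :
    fourier n (x : AddCircle (2 * π)) = exp (n * x * I) := by
  rw [fourier_coe_apply]
  congr 1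
  push_cast
  field_simp

theorem fourierCoeff_periodic_lift {f : ℝ → ℂ} (hf : Function.Periodic f (2 * π)) (n : ℤ) :
    fourierCoeff hf.lift n = fourierCoef f n := by
  rw [fourierCoeff_eq_intervalIntegral _ n 0, fourierCoef, zero_add, Complex.real_smul]
  push_cast
  congr 1
  refine intervalIntegral.integral_congr fun x _ => ?_
  rw [smul_eq_mul, fourier_coe_two_pi, hf.lift_coe, mul_comm]
  push_cast
  ring_nf

theorem integral_haarAddCircle_two_pi {E : Type*} [NormedAddCommGroup E] [NormedSpace ℝ E]
    (f : AddCircle (2 * π) → E) :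
    ∫ x, f x ∂haarAddCircle = (2 * π)⁻¹ • ∫ x in 0..2 * π, f x := by
  rw [integral_haarAddCircle, ← AddCircle.intervalIntegral_preimage (2 * π) 0, zero_add]

theorem intervalIntegral.integral_im {f : ℝ → ℂ} {a b : ℝ} (hf : IntervalIntegrable f volume a b) :
    ∫ s in a..b, (f s).im = (∫ s in a..b, f s).im :=
  ContinuousLinearMap.intervalIntegral_comp_comm imCLM hf

theorem hasSum_sq_norm_fourierCoef_mul_sin {f : ℝ → ℂ} (hf : Continuous f)
    (hper : Function.Periodic f (2 * π)) (t : ℝ) :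
    HasSum (fun n : ℤ => ‖fourierCoef f n‖ ^ 2 * Real.sin (n * t))
      ((2 * π)⁻¹ * ∫ s in 0..2 * π, (conj (f s) * f (s + t)).im) := by
  let F : C(AddCircle (2 * π), ℂ) := ⟨hper.lift, continuous_coinduced_dom.mpr hf⟩
  have h := Complex.hasSum_im (hasSum_sq_norm_fourierCoeff_mul_fourier F t)
  rw [show ⇑F = hper.lift from rfl] at h
  convert h using 1
  · ext n
    rw [fourierCoeff_periodic_lift, fourier_coe_two_pi, ← ofReal_pow, ← ofReal_intCast,
      ← ofReal_mul, im_ofReal_mul, exp_ofReal_mul_I_im]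
  · have hint : IntervalIntegrable (fun s => conj (f s) * f (s + t)) volume 0 (2 * π) :=
      ((continuous_conj.comp hf).mul (hf.comp (continuous_add_const t))).intervalIntegrable _ _
    rw [integral_haarAddCircle_two_pi, Complex.smul_im, smul_eq_mul,
      intervalIntegral.integral_im hint]
    rfl

theorem abs_le_pi_div_two_mul_norm_exp_mul_I_sub_one {x : ℝ} (hx : |x| ≤ π) :
    |x| ≤ π / 2 * ‖exp (x * I) - 1‖ := by
  have hsin := mul_abs_le_abs_sin (x := x / 2) (by rw [abs_div, abs_two]; linarith)
  rw [mul_comm (x : ℂ), norm_exp_I_mul_ofReal_sub_one, norm_mul, norm_two, Real.norm_eq_abs]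
  rw [abs_div, abs_two] at hsin
  have := pi_pos
  field_simp at hsin ⊢
  linarith

theorem abs_sub_sin_le_norm_exp_mul_I_sub_one_pow {x : ℝ} (hx : |x| ≤ π) :
    |x - Real.sin x| ≤ π ^ 3 / 48 * ‖exp (x * I) - 1‖ ^ 3 :=
  calc |x - Real.sin x| ≤ |x| ^ 3 / 6 := abs_sub_sin_le x
    _ ≤ (π / 2 * ‖exp (x * I) - 1‖) ^ 3 / 6 := by
      gcongr; exact abs_le_pi_div_two_mul_norm_exp_mul_I_sub_one hx
    _ = π ^ 3 / 48 * ‖exp (x * I) - 1‖ ^ 3 := by ring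

theorem conj_exp_ofReal_mul_I_mul (x y : ℝ) :
    conj (exp (x * I)) * exp (y * I) = exp ((y - x : ℝ) * I) := by
  rw [← Complex.exp_conj, ← Complex.exp_add, map_mul, conj_ofReal, conj_I]
  push_cast
  ring_nf

theorem norm_exp_ofReal_mul_I_sub (x y : ℝ) :
    ‖exp (y * I) - exp (x * I)‖ = ‖exp ((y - x : ℝ) * I) - 1‖ := by
  have h : exp (y * I) - exp (x * I) = exp (x * I) * (exp ((y - x : ℝ) * I) - 1) := by
    rw [mul_sub, mul_one, ← Complex.exp_add]
    push_cast
    ring_nf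
  rw [h, norm_mul, norm_exp_ofReal_mul_I, one_mul]

theorem tendsto_integral_sub_comp_add_div {φ : ℝ → ℝ} (hφ : Continuous φ) (a b : ℝ) :
    Tendsto (fun t => (∫ s in a..b, (φ (s + t) - φ s)) / t) (𝓝[≠] 0) (𝓝 (φ b - φ a)) := by
  have hslope (c : ℝ) := (hφ.integral_hasStrictDerivAt a c).hasDerivAt.tendsto_slope_zero
  refine ((hslope b).sub (hslope a)).congr fun t => ?_
  have hint (c d : ℝ) : IntervalIntegrable φ volume c d := hφ.intervalIntegrable c d
  rw [intervalIntegral.integral_sub (f := fun s => φ (s + t))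
    ((hφ.comp (continuous_add_const t)).intervalIntegrable _ _) (hint a b),
    intervalIntegral.integral_comp_add_right φ t, intervalIntegral.integral_same, sub_zero,
    smul_eq_mul, smul_eq_mul, ← mul_sub, div_eq_inv_mul]
  congr 1
  linarith [intervalIntegral.integral_add_adjacent_intervals (hint a (a + t)) (hint (a + t) (b + t)),
    intervalIntegral.integral_add_adjacent_intervals (hint a b) (hint b (b + t))]

theorem eventually_forall_abs_comp_add_sub_le {φ : ℝ → ℝ} (hφ : Continuous φ) (a b : ℝ)
    {ε : ℝ} (hε : 0 < ε) : ∀ᶠ t in 𝓝 0, ∀ s ∈ Set.Icc a b, |φ (s + t) - φ s| ≤ ε := by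
  have h := Continuous.tendstoUniformly (fun t (s : Set.Icc a b) => φ (s + t)) (by fun_prop) 0
  filter_upwards [Metric.tendstoUniformly_iff.mp h ε hε] with t ht s hs
  simpa [Real.dist_eq, abs_sub_comm] using (ht ⟨s, hs⟩).le

theorem isLittleO_integral_sub_sin_of_isLittleO {φ : ℝ → ℝ} (hφ : Continuous φ) {a b : ℝ}
    (hab : a ≤ b)
    (hsmooth : (fun t : ℝ => ∫ s in a..b, ‖exp (φ (s + t) * I) - exp (φ s * I)‖ ^ 3)
      =o[𝓝[>] 0] (fun t : ℝ => t)) :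
    (fun t : ℝ => ∫ s in a..b, (φ (s + t) - φ s - Real.sin (φ (s + t) - φ s)))
      =o[𝓝[>] 0] (fun t : ℝ => t) := by
  refine IsBigO.trans_isLittleO (IsBigO.of_bound (π ^ 3 / 48) ?_) hsmooth
  filter_upwards [nhdsWithin_le_nhds (eventually_forall_abs_comp_add_sub_le hφ a b pi_pos)]
    with t ht
  have hcont : Continuous fun s => ‖exp (φ (s + t) * I) - exp (φ s * I)‖ ^ 3 := by fun_prop
  refine (intervalIntegral.norm_integral_le_of_norm_le hab (ae_of_all _ fun s hs => ?_)
    ((hcont.const_mul (π ^ 3 / 48)).intervalIntegrable a b)).trans ?_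
  · rw [Real.norm_eq_abs, norm_exp_ofReal_mul_I_sub]
    exact abs_sub_sin_le_norm_exp_mul_I_sub_one_pow (ht s (Set.Ioc_subset_Icc_self hs))
  · rw [intervalIntegral.integral_const_mul]
    exact mul_le_mul_of_nonneg_left (Real.le_norm_self _) (by positivity)

theorem tendsto_integral_sin_sub_div {φ : ℝ → ℝ} (hφ : Continuous φ) {a b : ℝ} (hab : a ≤ b)
    (hsmooth : (fun t : ℝ => ∫ s in a..b, ‖exp (φ (s + t) * I) - exp (φ s * I)‖ ^ 3)
      =o[𝓝[>] 0] (fun t : ℝ => t)) :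
    Tendsto (fun t => (∫ s in a..b, Real.sin (φ (s + t) - φ s)) / t) (𝓝[>] 0)
      (𝓝 (φ b - φ a)) := by
  have hmain := (tendsto_integral_sub_comp_add_div hφ a b).mono_left (nhdsGT_le_nhdsNE 0)
  have hrem := (isLittleO_integral_sub_sin_of_isLittleO hφ hab hsmooth).tendsto_div_nhds_zero
  rw [← sub_zero (φ b - φ a)]
  refine (hmain.sub hrem).congr fun t => ?_
  have hδ : Continuous fun s => φ (s + t) - φ s := by fun_prop
  have hr : Continuous fun s => φ (s + t) - φ s - Real.sin (φ (s + t) - φ s) := by fun_prop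
  rw [← sub_div, ← intervalIntegral.integral_sub (hδ.intervalIntegrable a b)
    (hr.intervalIntegrable a b)]
  simp only [sub_sub_cancel]

theorem kahane_zygmund_class_riemann_sum_general (f : ℝ → ℂ) (φ : ℝ → ℝ)
    (hcont : Continuous f)
    (hper : Function.Periodic f (2 * Real.pi))
    (hsmooth : (fun t : ℝ => ∫ s in (0:ℝ)..(2 * Real.pi), ‖f (s + t) - f s‖ ^ 3)
      =o[nhdsWithin 0 (Set.Ioi 0)] (fun t : ℝ => t))
    (hφ : Continuous φ) (hlift : ∀ t, f t = Complex.exp ((φ t : ℂ) * Complex.I)) :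
    ∃ L : ℝ → ℝ,
      (∀ t : ℝ, 0 < t →
        Tendsto (fun N : ℕ =>
            ∑ n ∈ Finset.Icc (-(N : ℤ)) (N : ℤ),
              ‖fourierCoef f n‖ ^ 2 * Real.sin ((n : ℝ) * t) / t)
          atTop (nhds (L t))) ∧
      Tendsto L (nhdsWithin 0 (Set.Ioi 0))
        (nhds ((φ (2 * Real.pi) - φ 0) / (2 * Real.pi))) := by
  obtain rfl : f = fun t => exp (φ t * I) := funext hlift
  refine ⟨fun t => (2 * π)⁻¹ * (∫ s in 0..2 * π, Real.sin (φ (s + t) - φ s)) / t,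
    fun t _ => ?_, ?_⟩
  · have h := (hasSum_sq_norm_fourierCoef_mul_sin hcont hper t).div_const t
    simp only [conj_exp_ofReal_mul_I_mul, exp_ofReal_mul_I_im] at h
    exact h.comp Finset.tendsto_Icc_neg
  · convert (tendsto_integral_sin_sub_div hφ two_pi_pos.le hsmooth).const_mul (2 * π)⁻¹
      using 2 <;> ring

/-- For a continuous unimodular loop in Zygmund's class `λ³_{1/3}`, i.e. with
`∫ |f(s+t) − f(s)|³ ds = o(t)` as `t → 0⁺`, the Riemann `(R,1)` means of
`∑ n |a_n|²` converge to the winding number (given by a continuous lift `φ`). -/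
theorem kahane_zygmund_class_riemann_sum (f : ℝ → ℂ) (φ : ℝ → ℝ)
    (hcont : Continuous f)
    (hper : Function.Periodic f (2 * Real.pi))
    (hmod : ∀ t, ‖f t‖ = 1)
    (hsmooth : (fun t : ℝ => ∫ s in (0:ℝ)..(2 * Real.pi), ‖f (s + t) - f s‖ ^ 3)
      =o[nhdsWithin 0 (Set.Ioi 0)] (fun t : ℝ => t))
    (hφ : Continuous φ) (hlift : ∀ t, f t = Complex.exp ((φ t : ℂ) * Complex.I)) :
    ∃ L : ℝ → ℝ,
      (∀ t : ℝ, 0 < t →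
        Tendsto (fun N : ℕ =>
            ∑ n ∈ Finset.Icc (-(N : ℤ)) (N : ℤ),
              ‖fourierCoef f n‖ ^ 2 * Real.sin ((n : ℝ) * t) / t)
          atTop (nhds (L t))) ∧
      Tendsto L (nhdsWithin 0 (Set.Ioi 0))
        (nhds ((φ (2 * Real.pi) - φ 0) / (2 * Real.pi))) :=
  kahane_zygmund_class_riemann_sum_general f φ hcont hper hsmooth hφ hlift
end
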